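/- arXiv:math/0504174 — 3 statements merged into one kernel-verified Lean document; each statement's English description precedes it below -/
import Mathlib

section
/- Let l ∈ (0, π] and let v, Z : [0, l] → ℝ with Z satisfying ∫₀ˡ Z(t)² dt < ε², and v a C² solution of v'' + v = Z with |v(0) − a| < η and |v'(0) − b| < η. Then there is an absolute constant C > 0 (independent of l, v, Z, a, b, ε, η) such that for all t ∈ [0, l], |v(t) − (a cos t + b sin t)| < C(ε + η) and |v'(t) − (−a sin t + b cos t)| < C(ε + η). -/
open Real Set MeasureTheory intervalIntegral

/-- Lemma 1.6 (Cauchy data version): if `v'' + v = Z` with `∫ Z² < ε²` and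
`|v 0 - a| < η`, `|v' 0 - b| < η`, then `v` is `C(ε+η)`-close (in C¹ norm on `[0,l]`,
`l ≤ π`) to the solution `a cos t + b sin t` of `u'' + u = 0`, for an absolute
constant `C`. -/
theorem stmt0 :
    ∃ C : ℝ, 0 < C ∧
      ∀ (l a b ε η : ℝ) (v v' v'' Z : ℝ → ℝ),
        0 < l → l ≤ π → 0 < ε →
        (∀ t ∈ Icc (0:ℝ) l, HasDerivAt v (v' t) t) →
        (∀ t ∈ Icc (0:ℝ) l, HasDerivAt v' (v'' t) t) →
        ContinuousOn Z (Icc (0:ℝ) l) →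
        (∀ t ∈ Icc (0:ℝ) l, v'' t + v t = Z t) →
        (∫ t in (0:ℝ)..l, (Z t) ^ 2) < ε ^ 2 →
        |v 0 - a| < η → |v' 0 - b| < η →
        ∀ t ∈ Icc (0:ℝ) l,
          |v t - (a * Real.cos t + b * Real.sin t)| < C * (ε + η) ∧
          |v' t - (-a * Real.sin t + b * Real.cos t)| < C * (ε + η) := by
  refine ⟨Real.exp π, Real.exp_pos π, ?_⟩
  intro l a b ε η v v' v'' Z hl hlπ hε hv hv' hZc hode hZint h0 h0'
  have hη : 0 < η := lt_of_le_of_lt (abs_nonneg _) h0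
  set u : ℝ → ℝ := fun t => a * Real.cos t + b * Real.sin t with hu_def
  set u' : ℝ → ℝ := fun t => -a * Real.sin t + b * Real.cos t with hu'_def
  set w : ℝ → ℝ := fun t => v t - u t with hw_def
  set w' : ℝ → ℝ := fun t => v' t - u' t with hw'_def
  set E : ℝ → ℝ := fun t => w t ^ 2 + w' t ^ 2 with hE_def
  -- derivatives of u, u'
  have hu_deriv : ∀ t : ℝ, HasDerivAt u (u' t) t := by
    intro t
    have h1 : HasDerivAt (fun t => a * Real.cos t) (a * (-Real.sin t)) t :=
      (Real.hasDerivAt_cos t).const_mul a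
    have h2 : HasDerivAt (fun t => b * Real.sin t) (b * Real.cos t) t :=
      (Real.hasDerivAt_sin t).const_mul b
    have := h1.add h2
    refine this.congr_deriv ?_
    simp [hu'_def]
  have hu'_deriv : ∀ t : ℝ, HasDerivAt u' (-(u t)) t := by
    intro t
    have h1 : HasDerivAt (fun t => -a * Real.sin t) (-a * Real.cos t) t :=
      (Real.hasDerivAt_sin t).const_mul (-a)
    have h2 : HasDerivAt (fun t => b * Real.cos t) (b * (-Real.sin t)) t :=
      (Real.hasDerivAt_cos t).const_mul b
    have := h1.add h2
    refine this.congr_deriv ?_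
    simp [hu_def]; ring
  have hw : ∀ t ∈ Icc (0:ℝ) l, HasDerivAt w (w' t) t := fun t ht =>
    (hv t ht).sub (hu_deriv t)
  have hw' : ∀ t ∈ Icc (0:ℝ) l, HasDerivAt w' (Z t - w t) t := by
    intro t ht
    have h := (hv' t ht).sub (hu'_deriv t)
    have heq : v'' t - -(u t) = Z t - w t := by
      have := hode t ht
      simp only [hw_def]
      linarith
    rw [heq] at h
    exact h
  have hE : ∀ t ∈ Icc (0:ℝ) l,
      HasDerivAt E (2 * w t * w' t + 2 * w' t * (Z t - w t)) t := by
    intro t ht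
    have h1 : HasDerivAt (fun s => w s ^ 2) (2 * w t * w' t) t := by
      have := (hw t ht).pow 2
      refine this.congr_deriv ?_; ring
    have h2 : HasDerivAt (fun s => w' s ^ 2) (2 * w' t * (Z t - w t)) t := by
      have := (hw' t ht).pow 2
      refine this.congr_deriv ?_; ring
    exact h1.add h2
  -- the primitive of Z²
  set I : ℝ → ℝ := fun x => ∫ s in (0:ℝ)..x, Z s ^ 2 with hI_def
  have hZsq : ContinuousOn (fun s => Z s ^ 2) (Icc (0:ℝ) l) := hZc.pow 2
  have hZint_on : ∀ x ∈ Icc (0:ℝ) l,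
      IntervalIntegrable (fun s => Z s ^ 2) volume 0 x := by
    intro x hx
    apply ContinuousOn.intervalIntegrable
    apply hZsq.mono
    rw [uIcc_of_le hx.1]
    exact Icc_subset_Icc le_rfl hx.2
  -- G is antitone
  set G : ℝ → ℝ := fun t => Real.exp (-t) * E t - I t with hG_def
  have hGderiv : ∀ t ∈ Ioo (0:ℝ) l,
      HasDerivAt G (-Real.exp (-t) * E t
        + Real.exp (-t) * (2 * w t * w' t + 2 * w' t * (Z t - w t)) - Z t ^ 2) t := by
    intro t ht
    have htIcc : t ∈ Icc (0:ℝ) l := Ioo_subset_Icc_self ht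
    have hexp : HasDerivAt (fun s : ℝ => Real.exp (-s)) (-Real.exp (-t)) t := by
      have := (hasDerivAt_neg t).exp
      convert this using 1; ring
    have h1 := hexp.mul (hE t htIcc)
    have h2 : HasDerivAt I (Z t ^ 2) t := by
      apply intervalIntegral.integral_hasDerivAt_right (hZint_on t htIcc)
      · exact ContinuousOn.stronglyMeasurableAtFilter isOpen_Ioo
          (hZsq.mono Ioo_subset_Icc_self) t ht
      · exact hZsq.continuousAt (Icc_mem_nhds ht.1 ht.2)
    exact h1.sub h2
  -- continuity of G on Icc
  have hwc : ContinuousOn w (Icc (0:ℝ) l) := fun t ht =>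
    (hw t ht).continuousAt.continuousWithinAt
  have hw'c : ContinuousOn w' (Icc (0:ℝ) l) := fun t ht =>
    (hw' t ht).continuousAt.continuousWithinAt
  have hEc : ContinuousOn E (Icc (0:ℝ) l) := (hwc.pow 2).add (hw'c.pow 2)
  have hIc : ContinuousOn I (Icc (0:ℝ) l) := by
    have hint : IntegrableOn (fun s => Z s ^ 2) (uIcc (0:ℝ) l) volume := by
      rw [uIcc_of_le hl.le]
      exact hZsq.integrableOn_compact isCompact_Icc
    have := intervalIntegral.continuousOn_primitive_interval (μ := volume) hint
    rwa [uIcc_of_le hl.le] at this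
  have hGc : ContinuousOn G (Icc (0:ℝ) l) :=
    (((Real.continuous_exp.comp continuous_neg).continuousOn).mul hEc).sub hIc
  -- G is antitone
  have hGanti : AntitoneOn G (Icc (0:ℝ) l) := by
    apply antitoneOn_of_deriv_nonpos (convex_Icc 0 l) hGc
    · intro x hx
      rw [interior_Icc] at hx
      exact ((hGderiv x hx).differentiableAt).differentiableWithinAt
    · intro x hx
      rw [interior_Icc] at hx
      rw [(hGderiv x hx).deriv]
      have hEx : E x = w x ^ 2 + w' x ^ 2 := rfl
      have hexp1 : Real.exp (-x) ≤ 1 := by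
        rw [Real.exp_le_one_iff]; linarith [hx.1]
      have hexp0 : (0:ℝ) < Real.exp (-x) := Real.exp_pos _
      rw [hEx]
      nlinarith [mul_nonneg hexp0.le
          (by nlinarith [sq_nonneg (w x), sq_nonneg (w' x - Z x)] :
            (0:ℝ) ≤ Z x ^ 2 - (2 * w x * w' x + 2 * w' x * (Z x - w x)
              - (w x ^ 2 + w' x ^ 2))),
        mul_nonneg (by linarith : (0:ℝ) ≤ 1 - Real.exp (-x)) (sq_nonneg (Z x))]
  -- conclude
  intro t ht
  have hG0 : G t ≤ G 0 := hGanti (left_mem_Icc.2 hl.le) ht ht.1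
  have hG0val : G 0 = E 0 := by
    show Real.exp (-0) * E 0 - (∫ s in (0:ℝ)..(0:ℝ), Z s ^ 2) = E 0
    simp
  have hIt0 : 0 ≤ I t :=
    intervalIntegral.integral_nonneg ht.1 (fun s _ => sq_nonneg _)
  have hItl : I t ≤ I l :=
    intervalIntegral.integral_mono_interval le_rfl ht.1 ht.2
      (Filter.Eventually.of_forall fun s => sq_nonneg _)
      (hZint_on l (right_mem_Icc.2 hl.le))
  have hE0 : E 0 < 2 * η ^ 2 := by
    have h1 : w 0 = v 0 - a := by simp [hw_def, hu_def]
    have h2 : w' 0 = v' 0 - b := by simp [hw'_def, hu'_def]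
    have hE0' : E 0 = w 0 ^ 2 + w' 0 ^ 2 := rfl
    have ha := abs_lt.mp h0
    have hb := abs_lt.mp h0'
    rw [hE0', h1, h2]
    nlinarith [ha.1, ha.2, hb.1, hb.2]
  have hE0nn : 0 ≤ E 0 := add_nonneg (sq_nonneg _) (sq_nonneg _)
  have hEt : E t ≤ Real.exp t * (E 0 + I t) := by
    have hGt : Real.exp (-t) * E t - I t ≤ E 0 := by rw [← hG0val]; exact hG0
    have h1 : Real.exp (-t) * E t ≤ E 0 + I t := by linarith
    calc E t = Real.exp t * (Real.exp (-t) * E t) := by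
          rw [← mul_assoc, ← Real.exp_add]; simp
      _ ≤ Real.exp t * (E 0 + I t) :=
          mul_le_mul_of_nonneg_left h1 (Real.exp_pos t).le
  have hEbound : E t < Real.exp π * (ε ^ 2 + 2 * η ^ 2) := by
    have h1 : Real.exp t ≤ Real.exp π := Real.exp_le_exp.2 (le_trans ht.2 hlπ)
    have hnn : 0 ≤ E 0 + I t := by linarith
    calc E t ≤ Real.exp t * (E 0 + I t) := hEt
      _ ≤ Real.exp π * (E 0 + I t) := mul_le_mul_of_nonneg_right h1 hnn
      _ < Real.exp π * (ε ^ 2 + 2 * η ^ 2) := by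
          apply mul_lt_mul_of_pos_left _ (Real.exp_pos π)
          linarith
  have hexp2 : (2:ℝ) ≤ Real.exp π := by
    have h1 := Real.add_one_le_exp π
    have h2 := Real.pi_gt_three
    linarith
  have hkey : E t < (Real.exp π * (ε + η)) ^ 2 := by
    have h3 : ε ^ 2 + 2 * η ^ 2 ≤ Real.exp π * (ε + η) ^ 2 := by
      nlinarith [mul_pos hε hη, sq_nonneg (ε + η)]
    calc E t < Real.exp π * (ε ^ 2 + 2 * η ^ 2) := hEbound
      _ ≤ Real.exp π * (Real.exp π * (ε + η) ^ 2) :=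
          mul_le_mul_of_nonneg_left h3 (Real.exp_pos π).le
      _ = (Real.exp π * (ε + η)) ^ 2 := by ring
  have hX : 0 < Real.exp π * (ε + η) := by positivity
  have habs : ∀ y : ℝ, y ^ 2 ≤ E t → |y| < Real.exp π * (ε + η) := by
    intro y hy
    have h2 : y ^ 2 < (Real.exp π * (ε + η)) ^ 2 := lt_of_le_of_lt hy hkey
    nlinarith [abs_nonneg y, sq_abs y]
  have hEt' : E t = w t ^ 2 + w' t ^ 2 := rfl
  constructor
  · have h1 : w t ^ 2 ≤ E t := by rw [hEt']; linarith [sq_nonneg (w' t)]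
    have h2 := habs (w t) h1
    simp only [hw_def, hu_def] at h2
    exact h2
  · have h1 : w' t ^ 2 ≤ E t := by rw [hEt']; linarith [sq_nonneg (w t)]
    have h2 := habs (w' t) h1
    simp only [hw'_def, hu'_def] at h2
    exact h2
end

section
/- Let 0 < l < π and let v, Z : [0, l] → ℝ with ∫₀ˡ Z(t)² dt < ε², and v a C² solution of v'' + v = Z with |v(0) − a| < η and |v(l) − b| < η. Then there is an absolute constant C > 0 such that for all t ∈ [0, l], |v(t) − ũ(t)| < (C/ sin l)(ε + η) and |v'(t) − ũ'(t)| < (C/ sin l)(ε + η), where ũ is the unique solution of u'' + u = 0 on [0, l] with boundary values ũ(0) = a and ũ(l) = b. -/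
open Real Set

section Aux

/-- Representation formula: if `u'' + u = W` on `[0,l]` with `W` continuous on `ℝ`,
then `u` and `u'` are given by variation of parameters. -/
lemma stmt1_rep (l : ℝ) (hl0 : 0 < l) (u u' u'' W : ℝ → ℝ) (hWc : Continuous W)
    (hu : ∀ t ∈ Icc (0:ℝ) l, HasDerivAt u (u' t) t)
    (hu' : ∀ t ∈ Icc (0:ℝ) l, HasDerivAt u' (u'' t) t)
    (hode : ∀ t ∈ Icc (0:ℝ) l, u'' t + u t = W t) :
    ∀ t ∈ Icc (0:ℝ) l,
      u t = Real.cos t * (u 0 - ∫ s in (0:ℝ)..t, Real.sin s * W s)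
          + Real.sin t * (u' 0 + ∫ s in (0:ℝ)..t, Real.cos s * W s) ∧
      u' t = -Real.sin t * (u 0 - ∫ s in (0:ℝ)..t, Real.sin s * W s)
          + Real.cos t * (u' 0 + ∫ s in (0:ℝ)..t, Real.cos s * W s) := by
  have hSW : Continuous fun s => Real.sin s * W s := Real.continuous_sin.mul hWc
  have hCW : Continuous fun s => Real.cos s * W s := Real.continuous_cos.mul hWc
  have hSd : ∀ t : ℝ, HasDerivAt (fun r => ∫ s in (0:ℝ)..r, Real.sin s * W s)
      (Real.sin t * W t) t := fun t =>
    intervalIntegral.integral_hasDerivAt_right (hSW.intervalIntegrable _ _)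
      (hSW.stronglyMeasurableAtFilter _ _) hSW.continuousAt
  have hCd : ∀ t : ℝ, HasDerivAt (fun r => ∫ s in (0:ℝ)..r, Real.cos s * W s)
      (Real.cos t * W t) t := fun t =>
    intervalIntegral.integral_hasDerivAt_right (hCW.intervalIntegrable _ _)
      (hCW.stronglyMeasurableAtFilter _ _) hCW.continuousAt
  have hF : ∀ x ∈ Icc (0:ℝ) l, HasDerivAt
      (fun t => u t * Real.cos t - u' t * Real.sin t
        + ∫ s in (0:ℝ)..t, Real.sin s * W s) 0 x := by
    intro x hx
    have d1 := (hu x hx).mul (Real.hasDerivAt_cos x)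
    have d2 := (hu' x hx).mul (Real.hasDerivAt_sin x)
    have h := (d1.sub d2).add (hSd x)
    refine h.congr_deriv ?_
    linear_combination (-Real.sin x) * hode x hx
  have hG : ∀ x ∈ Icc (0:ℝ) l, HasDerivAt
      (fun t => u t * Real.sin t + u' t * Real.cos t
        - ∫ s in (0:ℝ)..t, Real.cos s * W s) 0 x := by
    intro x hx
    have d1 := (hu x hx).mul (Real.hasDerivAt_sin x)
    have d2 := (hu' x hx).mul (Real.hasDerivAt_cos x)
    have h := (d1.add d2).sub (hCd x)
    refine h.congr_deriv ?_
    linear_combination (Real.cos x) * hode x hx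
  have hFconst := constant_of_has_deriv_right_zero
    (fun x hx => ((hF x hx).continuousAt.continuousWithinAt :
      ContinuousWithinAt (fun t => u t * Real.cos t - u' t * Real.sin t
        + ∫ s in (0:ℝ)..t, Real.sin s * W s) (Icc 0 l) x))
    (fun x hx => (hF x (Ico_subset_Icc_self hx)).hasDerivWithinAt)
  have hGconst := constant_of_has_deriv_right_zero
    (fun x hx => ((hG x hx).continuousAt.continuousWithinAt :
      ContinuousWithinAt (fun t => u t * Real.sin t + u' t * Real.cos t
        - ∫ s in (0:ℝ)..t, Real.cos s * W s) (Icc 0 l) x))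
    (fun x hx => (hG x (Ico_subset_Icc_self hx)).hasDerivWithinAt)
  intro t ht
  have e1 := hFconst t ht
  have e2 := hGconst t ht
  simp only [Real.cos_zero, Real.sin_zero, intervalIntegral.integral_same,
    mul_one, mul_zero, add_zero, sub_zero, zero_sub] at e1 e2
  have hpy := Real.sin_sq_add_cos_sq t
  constructor
  · linear_combination Real.cos t * e1 + Real.sin t * e2 + (-(u t)) * hpy
  · linear_combination (-Real.sin t) * e1 + Real.cos t * e2 + (-(u' t)) * hpy

/-- Integral bound: `∫₀ᵗ |g·W| ≤ (π+1)/2·ε` when `|g| ≤ 1` and `∫₀ˡ W² ≤ ε²`. -/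
lemma stmt1_intbound (l ε : ℝ) (hl0 : 0 < l) (hlπ : l < π) (hε : 0 < ε)
    (g W : ℝ → ℝ) (hgc : Continuous g) (hg1 : ∀ s, |g s| ≤ 1) (hWc : Continuous W)
    (hW2 : (∫ s in (0:ℝ)..l, (W s) ^ 2) ≤ ε ^ 2) :
    ∀ t ∈ Icc (0:ℝ) l, |∫ s in (0:ℝ)..t, g s * W s| ≤ (π + 1) / 2 * ε := by
  intro t ht
  have hint2 : (∫ s in (0:ℝ)..t, (W s) ^ 2) ≤ ε ^ 2 := by
    have hadd : (∫ s in (0:ℝ)..t, (W s) ^ 2) + (∫ s in t..l, (W s) ^ 2)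
        = ∫ s in (0:ℝ)..l, (W s) ^ 2 :=
      intervalIntegral.integral_add_adjacent_intervals
        ((hWc.pow 2).intervalIntegrable _ _) ((hWc.pow 2).intervalIntegrable _ _)
    have hnn : 0 ≤ ∫ s in t..l, (W s) ^ 2 :=
      intervalIntegral.integral_nonneg ht.2 (fun s _ => sq_nonneg _)
    linarith
  have h1 : |∫ s in (0:ℝ)..t, g s * W s| ≤ ∫ s in (0:ℝ)..t, |g s * W s| :=
    intervalIntegral.abs_integral_le_integral_abs ht.1
  have hqc : Continuous fun s => (ε + (W s) ^ 2 / ε) / 2 := by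
    apply Continuous.div_const
    exact continuous_const.add ((hWc.pow 2).div_const ε)
  have h2 : (∫ s in (0:ℝ)..t, |g s * W s|) ≤ ∫ s in (0:ℝ)..t, (ε + (W s) ^ 2 / ε) / 2 := by
    apply intervalIntegral.integral_mono_on ht.1
      ((hgc.mul hWc).abs.intervalIntegrable _ _) (hqc.intervalIntegrable _ _)
    intro s _
    show |g s * W s| ≤ (ε + (W s) ^ 2 / ε) / 2
    have hb : |g s * W s| ≤ |W s| := by
      rw [abs_mul]
      nlinarith [hg1 s, abs_nonneg (W s), abs_nonneg (g s)]
    have hkey : 0 ≤ (ε + (W s) ^ 2 / ε) / 2 - |W s| := by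
      have heq : (ε + (W s) ^ 2 / ε) / 2 - |W s| = (|W s| - ε) ^ 2 / (2 * ε) := by
        rw [← sq_abs (W s)]
        field_simp
        rw [sub_sq, sq_abs]
        ring
      rw [heq]
      positivity
    linarith
  have h3 : (∫ s in (0:ℝ)..t, (ε + (W s) ^ 2 / ε) / 2)
      = ((∫ s in (0:ℝ)..t, (ε + (W s) ^ 2 / ε))) / 2 := intervalIntegral.integral_div 2 _
  have h4 : (∫ s in (0:ℝ)..t, (ε + (W s) ^ 2 / ε))
      = ε * t + (∫ s in (0:ℝ)..t, (W s) ^ 2) / ε := by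
    rw [intervalIntegral.integral_add (g := fun s => (W s) ^ 2 / ε) intervalIntegrable_const
      (((hWc.pow 2).div_const ε).intervalIntegrable _ _),
      intervalIntegral.integral_div, intervalIntegral.integral_const]
    simp [smul_eq_mul]
    ring
  have h5 : (∫ s in (0:ℝ)..t, (W s) ^ 2) / ε ≤ ε := by
    rw [div_le_iff₀ hε]
    nlinarith
  have ht2 : t ≤ l := ht.2
  calc |∫ s in (0:ℝ)..t, g s * W s|
      ≤ (ε * t + (∫ s in (0:ℝ)..t, (W s) ^ 2) / ε) / 2 := by
        rw [← h4, ← h3]; linarith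
    _ ≤ (π + 1) / 2 * ε := by nlinarith

/-- Core version of the main theorem with explicit constant `9`. -/
lemma stmt1_core (l a b ε η : ℝ) (v v' v'' Z : ℝ → ℝ)
    (hl0 : 0 < l) (hlπ : l < π) (hε : 0 < ε)
    (hv : ∀ t ∈ Icc (0:ℝ) l, HasDerivAt v (v' t) t)
    (hv' : ∀ t ∈ Icc (0:ℝ) l, HasDerivAt v' (v'' t) t)
    (hZc : ContinuousOn Z (Icc (0:ℝ) l))
    (hode : ∀ t ∈ Icc (0:ℝ) l, v'' t + v t = Z t)
    (hZ2 : (∫ t in (0:ℝ)..l, (Z t) ^ 2) < ε ^ 2)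
    (h0 : |v 0 - a| < η) (hlb : |v l - b| < η) :
    ∀ t ∈ Icc (0:ℝ) l,
      |v t - (a * Real.sin (l - t) / Real.sin l + b * Real.sin t / Real.sin l)|
          < ((9:ℝ) / Real.sin l) * (ε + η) ∧
      |v' t - (-a * Real.cos (l - t) / Real.sin l + b * Real.cos t / Real.sin l)|
          < ((9:ℝ) / Real.sin l) * (ε + η) := by
  have hsl : 0 < Real.sin l := Real.sin_pos_of_pos_of_lt_pi hl0 hlπ
  have hsl1 : Real.sin l ≤ 1 := Real.sin_le_one l
  have hη : 0 < η := lt_of_le_of_lt (abs_nonneg _) h0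
  -- the continuous extension of Z
  have hpc : Continuous (fun s : ℝ => max 0 (min s l)) :=
    continuous_const.max (continuous_id.min continuous_const)
  have hpm : ∀ s : ℝ, max 0 (min s l) ∈ Icc (0:ℝ) l :=
    fun s => ⟨le_max_left _ _, max_le hl0.le (min_le_right _ _)⟩
  have hpe : ∀ s ∈ Icc (0:ℝ) l, max 0 (min s l) = s := by
    intro s hs
    rw [min_eq_left hs.2, max_eq_right hs.1]
  set W : ℝ → ℝ := fun s => Z (max 0 (min s l)) with hWdef
  have hWe : ∀ s ∈ Icc (0:ℝ) l, W s = Z s := fun s hs => by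
    rw [hWdef]; simp only; rw [hpe s hs]
  have hWc : Continuous W := hZc.comp_continuous hpc hpm
  -- the target solution and its derivatives
  set U : ℝ → ℝ := fun t => a * Real.sin (l - t) / Real.sin l + b * Real.sin t / Real.sin l
    with hUdef
  set U' : ℝ → ℝ := fun t => -a * Real.cos (l - t) / Real.sin l + b * Real.cos t / Real.sin l
    with hU'def
  have hU : ∀ t, HasDerivAt U (U' t) t := by
    intro t
    have h1 : HasDerivAt (fun t : ℝ => l - t) (-1) t := (hasDerivAt_id t).const_sub l
    have h2 : HasDerivAt (fun t : ℝ => Real.sin (l - t)) (Real.cos (l - t) * (-1)) t := h1.sin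
    have h3 := ((h2.const_mul a).div_const (Real.sin l)).add
      (((Real.hasDerivAt_sin t).const_mul b).div_const (Real.sin l))
    refine h3.congr_deriv ?_
    rw [hU'def]; ring
  have hU' : ∀ t, HasDerivAt U' (-(U t)) t := by
    intro t
    have h1 : HasDerivAt (fun t : ℝ => l - t) (-1) t := (hasDerivAt_id t).const_sub l
    have h2 : HasDerivAt (fun t : ℝ => Real.cos (l - t)) (-Real.sin (l - t) * (-1)) t := h1.cos
    have h3 := ((h2.const_mul (-a)).div_const (Real.sin l)).add
      (((Real.hasDerivAt_cos t).const_mul b).div_const (Real.sin l))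
    refine h3.congr_deriv ?_
    rw [hUdef]; ring
  have hU0 : U 0 = a := by rw [hUdef]; simp only; rw [sub_zero, Real.sin_zero]; field_simp; ring
  have hUl : U l = b := by rw [hUdef]; simp only; rw [sub_self, Real.sin_zero]; field_simp; ring
  -- apply the representation to w = v - U
  have hrep := stmt1_rep l hl0 (fun t => v t - U t) (fun t => v' t - U' t)
    (fun t => v'' t + U t) W hWc
    (fun t ht => (hv t ht).sub (hU t))
    (fun t ht => ((hv' t ht).sub (hU' t)).congr_deriv (by ring))
    (fun t ht => by rw [hWe t ht]; have := hode t ht; linarith)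
  -- integral bounds
  have hW2 : (∫ s in (0:ℝ)..l, (W s) ^ 2) ≤ ε ^ 2 := by
    have h1 : (∫ s in (0:ℝ)..l, (W s) ^ 2) = ∫ s in (0:ℝ)..l, (Z s) ^ 2 := by
      apply intervalIntegral.integral_congr
      intro s hs
      rw [uIcc_of_le hl0.le] at hs
      simp only
      rw [hWe s hs]
    linarith
  have hSb := stmt1_intbound l ε hl0 hlπ hε Real.sin W Real.continuous_sin
    (fun s => Real.abs_sin_le_one s) hWc hW2
  have hCb := stmt1_intbound l ε hl0 hlπ hε Real.cos W Real.continuous_cos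
    (fun s => Real.abs_cos_le_one s) hWc hW2
  set M : ℝ := (π + 1) / 2 * ε with hMdef
  have hM0 : 0 ≤ M := by rw [hMdef]; positivity
  have hlmem : l ∈ Icc (0:ℝ) l := ⟨hl0.le, le_refl l⟩
  -- boundary data
  have hw0 : |v 0 - U 0| < η := by rw [hU0]; exact h0
  have hwl : |v l - U l| < η := by rw [hUl]; exact hlb
  -- bound on A t = (v 0 - U 0) - S t
  have hA : ∀ t ∈ Icc (0:ℝ) l,
      |(v 0 - U 0) - ∫ s in (0:ℝ)..t, Real.sin s * W s| < η + M := by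
    intro t ht
    calc |(v 0 - U 0) - ∫ s in (0:ℝ)..t, Real.sin s * W s|
        ≤ |v 0 - U 0| + |∫ s in (0:ℝ)..t, Real.sin s * W s| := abs_sub _ _
      _ < η + M := by have := hSb t ht; rw [hMdef]; linarith
  -- bound on B l = (v' 0 - U' 0) + C l, from the boundary value at l
  have hBl : |(v' 0 - U' 0) + ∫ s in (0:ℝ)..l, Real.cos s * W s|
      < (2 * η + M) / Real.sin l := by
    have hr := (hrep l hlmem).1
    have hsin : Real.sin l * ((v' 0 - U' 0) + ∫ s in (0:ℝ)..l, Real.cos s * W s)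
        = (v l - U l) - Real.cos l
            * ((v 0 - U 0) - ∫ s in (0:ℝ)..l, Real.sin s * W s) := by
      linarith [hr]
    have h1 : |Real.sin l * ((v' 0 - U' 0) + ∫ s in (0:ℝ)..l, Real.cos s * W s)|
        < 2 * η + M := by
      rw [hsin]
      calc |(v l - U l) - Real.cos l * ((v 0 - U 0) - ∫ s in (0:ℝ)..l, Real.sin s * W s)|
          ≤ |v l - U l| + |Real.cos l|
              * |(v 0 - U 0) - ∫ s in (0:ℝ)..l, Real.sin s * W s| := by
            rw [← abs_mul]; exact abs_sub _ _
        _ < 2 * η + M := by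
            have hc := Real.abs_cos_le_one l
            have hAl := hA l hlmem
            nlinarith [abs_nonneg ((v 0 - U 0) - ∫ s in (0:ℝ)..l, Real.sin s * W s),
              abs_nonneg (Real.cos l)]
    rw [abs_mul, abs_of_pos hsl] at h1
    rw [lt_div_iff₀ hsl]
    nlinarith [h1]
  -- bound on B t
  have hB : ∀ t ∈ Icc (0:ℝ) l,
      |(v' 0 - U' 0) + ∫ s in (0:ℝ)..t, Real.cos s * W s|
        < (2 * η + M) / Real.sin l + 2 * M := by
    intro t ht
    have h1 : (v' 0 - U' 0) + (∫ s in (0:ℝ)..t, Real.cos s * W s)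
        = ((v' 0 - U' 0) + ∫ s in (0:ℝ)..l, Real.cos s * W s)
          + ((∫ s in (0:ℝ)..t, Real.cos s * W s) - ∫ s in (0:ℝ)..l, Real.cos s * W s) := by
      ring
    rw [h1]
    have h2 := abs_add_le ((v' 0 - U' 0) + ∫ s in (0:ℝ)..l, Real.cos s * W s)
      ((∫ s in (0:ℝ)..t, Real.cos s * W s) - ∫ s in (0:ℝ)..l, Real.cos s * W s)
    have h3 := abs_sub (∫ s in (0:ℝ)..t, Real.cos s * W s)
      (∫ s in (0:ℝ)..l, Real.cos s * W s)
    have h4 := hCb t ht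
    have h5 := hCb l hlmem
    rw [hMdef]
    linarith
  -- final numeric assembly
  have hfinal : (η + M) + ((2 * η + M) / Real.sin l + 2 * M)
      ≤ (9 / Real.sin l) * (ε + η) := by
    rw [div_mul_eq_mul_div, le_div_iff₀ hsl]
    have hdiv : (2 * η + M) / Real.sin l * Real.sin l = 2 * η + M :=
      div_mul_cancel₀ _ hsl.ne'
    have hπ : π < 3.15 := by linarith [Real.pi_lt_d2]
    have hMle : M ≤ 2.075 * ε := by rw [hMdef]; nlinarith
    nlinarith [hsl, hsl1, hε, hη, hM0, hdiv, mul_nonneg hM0 (sub_nonneg.mpr hsl1),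
      mul_nonneg hη.le (sub_nonneg.mpr hsl1), mul_nonneg hε.le (sub_nonneg.mpr hsl1)]
  intro t ht
  have hAt := hA t ht
  have hBt := hB t ht
  have hct := Real.abs_cos_le_one t
  have hst := Real.abs_sin_le_one t
  have hAn := abs_nonneg ((v 0 - U 0) - ∫ s in (0:ℝ)..t, Real.sin s * W s)
  have hBn := abs_nonneg ((v' 0 - U' 0) + ∫ s in (0:ℝ)..t, Real.cos s * W s)
  have hcn := abs_nonneg (Real.cos t)
  have hsn := abs_nonneg (Real.sin t)
  constructor
  · have h1 := (hrep t ht).1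
    calc |v t - U t|
        = |Real.cos t * ((v 0 - U 0) - ∫ s in (0:ℝ)..t, Real.sin s * W s)
          + Real.sin t * ((v' 0 - U' 0) + ∫ s in (0:ℝ)..t, Real.cos s * W s)| := by rw [h1]
      _ ≤ |Real.cos t| * |(v 0 - U 0) - ∫ s in (0:ℝ)..t, Real.sin s * W s|
          + |Real.sin t| * |(v' 0 - U' 0) + ∫ s in (0:ℝ)..t, Real.cos s * W s| := by
          rw [← abs_mul, ← abs_mul]; exact abs_add_le _ _
      _ < (η + M) + ((2 * η + M) / Real.sin l + 2 * M) := by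
          have k1 := mul_le_of_le_one_left hAn hct
          have k2 := mul_le_of_le_one_left hBn hst
          linarith
      _ ≤ (9 / Real.sin l) * (ε + η) := hfinal
  · have h1 := (hrep t ht).2
    calc |v' t - U' t|
        = |-Real.sin t * ((v 0 - U 0) - ∫ s in (0:ℝ)..t, Real.sin s * W s)
          + Real.cos t * ((v' 0 - U' 0) + ∫ s in (0:ℝ)..t, Real.cos s * W s)| := by rw [h1]
      _ ≤ |Real.sin t| * |(v 0 - U 0) - ∫ s in (0:ℝ)..t, Real.sin s * W s|
          + |Real.cos t| * |(v' 0 - U' 0) + ∫ s in (0:ℝ)..t, Real.cos s * W s| := by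
          rw [← abs_mul, ← abs_mul, ← abs_neg (Real.sin t * _)]
          rw [show -Real.sin t * ((v 0 - U 0) - ∫ s in (0:ℝ)..t, Real.sin s * W s)
            = -(Real.sin t * ((v 0 - U 0) - ∫ s in (0:ℝ)..t, Real.sin s * W s)) by ring]
          exact abs_add_le _ _
      _ < (η + M) + ((2 * η + M) / Real.sin l + 2 * M) := by
          have k1 := mul_le_of_le_one_left hAn hst
          have k2 := mul_le_of_le_one_left hBn hct
          linarith
      _ ≤ (9 / Real.sin l) * (ε + η) := hfinal

end Aux

/-- Lemma 1.5 (boundary data version): if `v'' + v = Z` with `∫ Z² < ε²` and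
`|v 0 - a| < η`, `|v l - b| < η`, `0 < l < π`, then `v` is `(C / sin l)(ε+η)`-close
in C¹ norm on `[0,l]` to the solution `ũ(t) = a sin(l-t)/sin l + b sin t / sin l`
of `u'' + u = 0` with `ũ(0)=a`, `ũ(l)=b`, for an absolute constant `C`. -/
theorem stmt1 :
    ∃ C : ℝ, 0 < C ∧
      ∀ (l a b ε η : ℝ) (v v' v'' Z : ℝ → ℝ),
        0 < l → l < π → 0 < ε →
        (∀ t ∈ Icc (0:ℝ) l, HasDerivAt v (v' t) t) →
        (∀ t ∈ Icc (0:ℝ) l, HasDerivAt v' (v'' t) t) →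
        ContinuousOn Z (Icc (0:ℝ) l) →
        (∀ t ∈ Icc (0:ℝ) l, v'' t + v t = Z t) →
        (∫ t in (0:ℝ)..l, (Z t) ^ 2) < ε ^ 2 →
        |v 0 - a| < η → |v l - b| < η →
        ∀ t ∈ Icc (0:ℝ) l,
          |v t - (a * Real.sin (l - t) / Real.sin l + b * Real.sin t / Real.sin l)|
              < (C / Real.sin l) * (ε + η) ∧
          |v' t - (-a * Real.cos (l - t) / Real.sin l + b * Real.cos t / Real.sin l)|
              < (C / Real.sin l) * (ε + η) := by
  refine ⟨9, by norm_num, ?_⟩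
  intro l a b ε η v v' v'' Z hl0 hlπ hε hv hv' hZc hode hZ2 h0 hlb
  exact stmt1_core l a b ε η v v' v'' Z hl0 hlπ hε hv hv' hZc hode hZ2 h0 hlb
end

section
/- Let 0 < d₁ < π and 0 < r < d₁/2. Then (∫_{d₁/2 − r}^{d₁/2 + r} sin(t)^{n−1} dt) / (∫_{d₁ − r}^{d₁ + r} sin(t)^{n−1} dt) ≥ 1/2ⁿ, for every integer n ≥ 1, provided d₁ + r ≤ π. -/
open Real Set

/-! Substituting `t = 2s` and using `sin (2s) = 2 sin s cos s ≤ 2 sin s` bounds the integral of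
`sin ^ (n - 1)` over `[d₁ - r, d₁ + r]` by `2ⁿ` times its integral over the half-interval
`[(d₁ - r)/2, (d₁ + r)/2]`, which lies inside `[d₁/2 - r, d₁/2 + r] ⊆ [0, π]`, where the
integrand is nonnegative. -/

theorem sin_two_mul_le_two_mul_sin {x : ℝ} (hx : 0 ≤ sin x) : sin (2 * x) ≤ 2 * sin x := by
  rw [sin_two_mul]
  nlinarith [cos_le_one x]

theorem integral_sin_pow_pos_of_le_pi (m : ℕ) {a b : ℝ} (ha : 0 ≤ a) (hab : a < b) (hb : b ≤ π) :
    0 < ∫ t in a..b, sin t ^ m :=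
  intervalIntegral.intervalIntegral_pos_of_pos_on
    ((continuous_sin.pow m).intervalIntegrable _ _)
    (fun _ hx ↦ pow_pos (sin_pos_of_pos_of_lt_pi (by linarith [hx.1]) (by linarith [hx.2])) m) hab

theorem integral_sin_pow_mono_interval (m : ℕ) {a b c d : ℝ} (hc : 0 ≤ c) (hca : c ≤ a)
    (hab : a ≤ b) (hbd : b ≤ d) (hd : d ≤ π) :
    ∫ t in a..b, sin t ^ m ≤ ∫ t in c..d, sin t ^ m := by
  refine intervalIntegral.integral_mono_interval hca hab hbd ?_
    ((continuous_sin.pow m).intervalIntegrable _ _)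
  filter_upwards [MeasureTheory.ae_restrict_mem measurableSet_Ioc] with x hx
  exact pow_nonneg (sin_nonneg_of_nonneg_of_le_pi (by linarith [hx.1]) (by linarith [hx.2])) m

theorem integral_sin_pow_two_mul_le (m : ℕ) {a b : ℝ} (ha : 0 ≤ a) (hab : a ≤ b)
    (hb : b ≤ π / 2) :
    ∫ t in (2 * a)..(2 * b), sin t ^ m ≤ 2 ^ (m + 1) * ∫ s in a..b, sin s ^ m := by
  have hpointwise : ∀ s ∈ Icc a b, sin (2 * s) ^ m ≤ 2 ^ m * sin s ^ m := fun s hs ↦ by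
    rw [← mul_pow]
    exact pow_le_pow_left₀
      (sin_nonneg_of_nonneg_of_le_pi (by linarith [hs.1]) (by linarith [hs.2]))
      (sin_two_mul_le_two_mul_sin
        (sin_nonneg_of_nonneg_of_le_pi (by linarith [hs.1]) (by linarith [hs.2, pi_pos]))) m
  calc ∫ t in (2 * a)..(2 * b), sin t ^ m
      = 2 * ∫ s in a..b, sin (2 * s) ^ m := (intervalIntegral.mul_integral_comp_mul_left ..).symm
    _ ≤ 2 * ∫ s in a..b, 2 ^ m * sin s ^ m := by
        gcongr
        refine intervalIntegral.integral_mono_on hab ?_ ?_ hpointwise <;>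
          exact Continuous.intervalIntegrable (by fun_prop) _ _
    _ = 2 ^ (m + 1) * ∫ s in a..b, sin s ^ m := by
        rw [intervalIntegral.integral_const_mul, pow_succ]
        ring

theorem stmt4_general (n : ℕ) (hn : 1 ≤ n) (d₁ r : ℝ)
    (hr₀ : 0 < r) (hr : r < d₁ / 2) (hsum : d₁ + r ≤ π) :
    (∫ t in (d₁ / 2 - r)..(d₁ / 2 + r), Real.sin t ^ (n - 1)) /
      (∫ t in (d₁ - r)..(d₁ + r), Real.sin t ^ (n - 1)) ≥ 1 / 2 ^ n := by
  obtain ⟨m, rfl⟩ := Nat.exists_eq_add_of_le' hn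
  rw [Nat.add_sub_cancel]
  have hdoubling := integral_sin_pow_two_mul_le m (a := (d₁ - r) / 2) (b := (d₁ + r) / 2)
    (by linarith) (by linarith) (by linarith)
  rw [mul_div_cancel₀ _ two_ne_zero, mul_div_cancel₀ _ two_ne_zero] at hdoubling
  have hshift := integral_sin_pow_mono_interval m (a := (d₁ - r) / 2) (b := (d₁ + r) / 2)
    (c := d₁ / 2 - r) (d := d₁ / 2 + r) (by linarith) (by linarith) (by linarith) (by linarith)
    (by linarith)
  have hden := integral_sin_pow_pos_of_le_pi m (a := d₁ - r) (b := d₁ + r) (by linarith)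
    (by linarith) hsum
  rw [ge_iff_le, div_le_div_iff₀ (by positivity) hden, one_mul, mul_comm]
  exact hdoubling.trans (by gcongr)

/-- Spherical annulus volume ratio: for `0 < d₁ < π`, `0 < r < d₁/2`, `d₁ + r ≤ π`
and `n ≥ 1`,
`(∫_{d₁/2-r}^{d₁/2+r} sin^{n-1}) / (∫_{d₁-r}^{d₁+r} sin^{n-1}) ≥ 1/2ⁿ`. -/
theorem stmt4 (n : ℕ) (hn : 1 ≤ n) (d₁ r : ℝ) (hd₀ : 0 < d₁) (hdπ : d₁ < π)
    (hr₀ : 0 < r) (hr : r < d₁ / 2) (hsum : d₁ + r ≤ π) :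
    (∫ t in (d₁ / 2 - r)..(d₁ / 2 + r), Real.sin t ^ (n - 1)) /
      (∫ t in (d₁ - r)..(d₁ + r), Real.sin t ^ (n - 1)) ≥ 1 / 2 ^ n :=
  stmt4_general n hn d₁ r hr₀ hr hsum
end
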